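/- The second Foley–Sammon direction d₂ = (S_W⁻¹ − (s_bᵀ (S_W⁻¹)² s_b)/(s_bᵀ (S_W⁻¹)³ s_b) · (S_W⁻¹)²) s_b is orthogonal to d₁ = S_W⁻¹ s_b. -/

import Mathlib

/-!
With `A = S_W⁻¹` symmetric, `d₁ ⬝ᵥ B *ᵥ s_b = s_bᵀ (A B) s_b`, so `d₁ ⬝ᵥ d₂ = q₂ - (q₂ / q₃) q₃` with
`qₖ = s_bᵀ Aᵏ s_b`, which vanishes as soon as `q₃ ≠ 0`. For the degenerate case: `A` is positive
semidefinite and `q₃ = (A s_b)ᵀ A (A s_b)`, so `q₃ = 0` forces `A² s_b = 0` and hence `q₂ = 0`.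
-/

open Matrix

namespace Matrix

variable {n : Type*} [Fintype n]

theorem IsSymm.mulVec_dotProduct_mulVec {R : Type*} [CommSemiring R] {A : Matrix n n R}
    (hA : A.IsSymm) (B : Matrix n n R) (x y : n → R) :
    A *ᵥ x ⬝ᵥ B *ᵥ y = x ⬝ᵥ (A * B) *ᵥ y := by
  rw [← hA.eq, mulVec_transpose, ← dotProduct_mulVec, hA.eq, mulVec_mulVec]

namespace PosSemidef

variable {A : Matrix n n ℝ}

theorem dotProduct_sq_mulVec_eq_zero_of_cube (hA : A.PosSemidef) {x : n → ℝ}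
    (hx : x ⬝ᵥ (A * A * A) *ᵥ x = 0) : x ⬝ᵥ (A * A) *ᵥ x = 0 := by
  have hsymm : A.IsSymm := hA.isHermitian
  have hquad : star (A *ᵥ x) ⬝ᵥ A *ᵥ (A *ᵥ x) = 0 := by
    rwa [star_trivial, hsymm.mulVec_dotProduct_mulVec, mulVec_mulVec]
  rw [← mulVec_mulVec, (hA.dotProduct_mulVec_zero_iff _).1 hquad,
    dotProduct_zero]

theorem mulVec_dotProduct_foleySammon_eq_zero (hA : A.PosSemidef) (s : n → ℝ) :
    A *ᵥ s ⬝ᵥ (A - (s ⬝ᵥ (A * A) *ᵥ s / s ⬝ᵥ (A * A * A) *ᵥ s) • (A * A)) *ᵥ s = 0 := by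
  have hsymm : A.IsSymm := hA.isHermitian
  rw [sub_mulVec, dotProduct_sub, smul_mulVec, dotProduct_smul, smul_eq_mul,
    hsymm.mulVec_dotProduct_mulVec, hsymm.mulVec_dotProduct_mulVec, ← mul_assoc]
  by_cases hq₃ : s ⬝ᵥ (A * A * A) *ᵥ s = 0
  · simp [hq₃, hA.dotProduct_sq_mulVec_eq_zero_of_cube hq₃]
  · rw [div_mul_cancel₀ _ hq₃, sub_self]

end PosSemidef

end Matrix

theorem foley_sammon_second_direction_orthogonal_general (M : ℕ)
    (S_W : Matrix (Fin M) (Fin M) ℝ) (hW : S_W.PosDef)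
    (s_b : Fin M → ℝ) :
    (S_W⁻¹.mulVec s_b) ⬝ᵥ
      (((S_W⁻¹ -
          ((s_b ⬝ᵥ (S_W⁻¹ * S_W⁻¹).mulVec s_b) /
              (s_b ⬝ᵥ (S_W⁻¹ * S_W⁻¹ * S_W⁻¹).mulVec s_b)) •
            (S_W⁻¹ * S_W⁻¹))).mulVec s_b) = 0 :=
  hW.posSemidef.inv.mulVec_dotProduct_foleySammon_eq_zero s_b

theorem foley_sammon_second_direction_orthogonal (M : ℕ)
    (S_W : Matrix (Fin M) (Fin M) ℝ) (hW : S_W.PosDef)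
    (s_b : Fin M → ℝ) (hs : s_b ≠ 0) :
    (S_W⁻¹.mulVec s_b) ⬝ᵥ
      (((S_W⁻¹ -
          ((s_b ⬝ᵥ (S_W⁻¹ * S_W⁻¹).mulVec s_b) /
              (s_b ⬝ᵥ (S_W⁻¹ * S_W⁻¹ * S_W⁻¹).mulVec s_b)) •
            (S_W⁻¹ * S_W⁻¹))).mulVec s_b) = 0 :=
  foley_sammon_second_direction_orthogonal_general M S_W hW s_b
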